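/- For m = 9, the map (r,s) ↦ h^9_{r,s} restricted to the set {(r,s) : 1 ≤ s ≤ r ≤ 10} is injective. -/

import Mathlib

/-- `h^9_{r,s} = ((12r-11s)^2 - 1)/528`. -/
def h9 (r s : ℤ) : ℚ := (((12 * r - 11 * s : ℤ) : ℚ) ^ 2 - 1) / 528

theorem stmt_3 (r s r' s' : ℤ)
    (h1 : 1 ≤ s) (h2 : s ≤ r) (h3 : r ≤ 10)
    (h4 : 1 ≤ s') (h5 : s' ≤ r') (h6 : r' ≤ 10)
    (heq : h9 r s = h9 r' s') : r = r' ∧ s = s' := by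
  unfold h9 at heq
  have hq : ((12 * r - 11 * s : ℤ) : ℚ) ^ 2 = ((12 * r' - 11 * s' : ℤ) : ℚ) ^ 2 := by
    field_simp at heq
    push_cast at heq ⊢
    linarith
  have key : (12 * r - 11 * s) ^ 2 = (12 * r' - 11 * s') ^ 2 := by exact_mod_cast hq
  have ha : 0 < 12 * r - 11 * s := by omega
  have hb : 0 < 12 * r' - 11 * s' := by omega
  have heq2 : 12 * r - 11 * s = 12 * r' - 11 * s' := by nlinarith [key, ha, hb]
  omega
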